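/- liminf_{r→∞} p_c^+(WH(r)) ≥ 1/4. -/

import Mathlib

open Finset


/-- Number of active neighbors of vertex `i` in the ring `C_n(r)`.
For `n > 2r+1` the `2r` offsets `±1, …, ±r` give pairwise distinct neighbors. -/
def activeNbrs (n r : ℕ) (σ : ZMod n → Bool) (i : ZMod n) : ℕ :=
  ∑ k ∈ Finset.Icc 1 r,
    ((if σ (i + (k : ZMod n)) then 1 else 0) + (if σ (i - (k : ZMod n)) then 1 else 0))

/-- One synchronous step of strict majority bootstrap percolation on `C_n(r)`:
a passive vertex (degree `2r`) becomes active iff at least `r+1 = ⌈(2r+1)/2⌉`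
of its neighbors are active; active vertices stay active. -/
def ringStep (n r : ℕ) (σ : ZMod n → Bool) : ZMod n → Bool :=
  fun i => σ i || decide (r + 1 ≤ activeNbrs n r σ i)

/-- The fixed point of strict MBP on `C_n(r)`; `n` monotone steps suffice to stabilize. -/
def ringFix (n r : ℕ) (σ : ZMod n → Bool) : ZMod n → Bool :=
  (ringStep n r)^[n] σ

/-- Probability of an event under i.i.d. Bernoulli(`p`) initial states. -/
noncomputable def pr {V : Type} [Fintype V] [DecidableEq V] (p : ℝ) (S : Set (V → Bool)) : ℝ :=
  ∑ σ : V → Bool, S.indicator (fun τ => ∏ v, (if τ v then p else 1 - p)) σ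

/-- Expectation of a random variable under i.i.d. Bernoulli(`p`) initial states. -/
noncomputable def expec {V : Type} [Fintype V] [DecidableEq V]
    (p : ℝ) (f : (V → Bool) → ℝ) : ℝ :=
  ∑ σ : V → Bool, f σ * ∏ v, (if σ v then p else 1 - p)

/-- `E_p[X_0(n,r)]`: probability that vertex `0` is active at the fixed point. -/
noncomputable def Ex (r : ℕ) (p : ℝ) (n : ℕ) : ℝ :=
  if h : n = 0 then 0 else
    haveI : NeZero n := ⟨h⟩
    pr p {σ : ZMod n → Bool | ringFix n r σ 0 = true}

/-- `p_R(n,r,p)`: probability that strictly more than half of the `n` vertices are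
active at the fixed point of strict MBP on `C_n(r)`. -/
noncomputable def pR (r : ℕ) (p : ℝ) (n : ℕ) : ℝ :=
  if h : n = 0 then 0 else
    haveI : NeZero n := ⟨h⟩
    pr p {σ : ZMod n → Bool |
      n < 2 * (Finset.univ.filter (fun i : ZMod n => ringFix n r σ i = true)).card}

open Finset

/-- Number of active neighbors of ring vertex `i` in the `r`-wheel `WH_n(r)`:
its `2r` ring neighbors plus the universal vertex (`none`). -/
def wheelNbrs (n r : ℕ) (σ : Option (ZMod n) → Bool) (i : ZMod n) : ℕ :=
  (if σ none then 1 else 0) +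
    ∑ k ∈ Finset.Icc 1 r,
      ((if σ (some (i + (k : ZMod n))) then 1 else 0) +
       (if σ (some (i - (k : ZMod n))) then 1 else 0))

/-- One synchronous step of strict MBP on the `r`-wheel `WH_n(r)`. The universal
vertex (degree `n`) needs at least `⌈(n+1)/2⌉` active neighbors (i.e. `n+1 ≤ 2·#active`);
a ring vertex (degree `2r+1`) needs at least `r+1 = ⌈(2r+2)/2⌉` active neighbors. -/
def wheelStep (n r : ℕ) [NeZero n] (σ : Option (ZMod n) → Bool) :
    Option (ZMod n) → Bool :=
  fun v =>
    match v with
    | none => σ none ||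
        decide (n + 1 ≤ 2 * (Finset.univ.filter (fun i : ZMod n => σ (some i) = true)).card)
    | some i => σ (some i) || decide (r + 1 ≤ wheelNbrs n r σ i)

/-- The fixed point of strict MBP on `WH_n(r)`; `n+1` monotone steps suffice. -/
def wheelFix (n r : ℕ) [NeZero n] (σ : Option (ZMod n) → Bool) : Option (ZMod n) → Bool :=
  (wheelStep n r)^[n + 1] σ

/-- `p_W(n,r,p)`: probability that strict MBP on the `r`-wheel `WH_n(r)` percolates. -/
noncomputable def pW (r : ℕ) (p : ℝ) (n : ℕ) : ℝ :=
  if h : n = 0 then 0 else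
    haveI : NeZero n := ⟨h⟩
    pr p {σ : Option (ZMod n) → Bool | ∀ v, wheelFix n r σ v = true}

/-- `p_c^+(WH(r)) = inf{ p ∈ [0,1] : liminf_{n→∞} P_p(A percolates WH_n(r)) = 1 }`. -/
noncomputable def pcPlus (r : ℕ) : ℝ :=
  sInf {p : ℝ | p ∈ Set.Icc (0:ℝ) 1 ∧ Filter.liminf (fun n => pW r p n) Filter.atTop = 1}

/-!
Fix `p < 1 / 4`, a density `y ≤ p` and a large `r`. A passive ring vertex stays passive forever
once it is enclosed by two runs of `r + 1` passive vertices such that every vertex in between has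
at most `r` active neighbours: the configuration that agrees with the initial one inside the
enclosure and is active outside it is then a fixed point lying above the initial one. Among
`m ≈ 64 / (1 - y) ^ (r + 1)` disjoint blocks on either side some block is passive with probability
close to `1` (second-moment method), while a given vertex has more than `r` active neighbours with
probability at most `4 ^ r y ^ (r + 1) (1 - y) ^ (r - 1)`; over the `O(m r)` vertices of the
enclosure this costs `O(r (4 y) ^ r)`, which is small precisely because `y < 1 / 4`. So each ring
vertex ends up active with probability `y + o(1)`, and by Markov's inequality the ring alone
reaches a strict majority with probability at most `2 y + o(1)`. The wheel can only percolate if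
the hub starts active or the ring alone reaches a majority, so it percolates with probability at
most `3 y + o(1) ≤ 7 / 8`, and `p_c^+(WH(r)) ≥ p`.
-/

section Bernoulli

variable {V : Type} [Fintype V] [DecidableEq V] {p : ℝ}

lemma pr_eq_expec_indicator (S : Set (V → Bool)) : pr p S = expec p (S.indicator 1) := by
  refine Finset.sum_congr rfl fun σ _ => ?_
  by_cases hσ : σ ∈ S <;> simp [hσ]

lemma expec_add (f g : (V → Bool) → ℝ) : expec p (f + g) = expec p f + expec p g := by
  simp only [expec, Pi.add_apply, add_mul, Finset.sum_add_distrib]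

lemma expec_sub (f g : (V → Bool) → ℝ) : expec p (f - g) = expec p f - expec p g := by
  simp only [expec, Pi.sub_apply, sub_mul, Finset.sum_sub_distrib]

lemma expec_const_mul (c : ℝ) (f : (V → Bool) → ℝ) :
    expec p (fun σ => c * f σ) = c * expec p f := by
  simp only [expec, mul_assoc, Finset.mul_sum]

lemma expec_sum {ι : Type*} (A : Finset ι) (f : ι → (V → Bool) → ℝ) :
    expec p (∑ a ∈ A, f a) = ∑ a ∈ A, expec p (f a) := by
  simp only [expec, Finset.sum_apply, Finset.sum_mul]
  exact Finset.sum_comm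

lemma expec_const (c : ℝ) : expec p (fun _ : V → Bool => c) = c := by
  have hmass : ∑ σ : V → Bool, ∏ v, (if σ v then p else 1 - p) = 1 := by
    rw [← Fintype.prod_sum (fun (_ : V) (b : Bool) => if b then p else 1 - p)]
    simp
  rw [expec, ← Finset.mul_sum, hmass, mul_one]

lemma pr_cylinder (T : Finset V) (b : V → Bool) :
    pr p {σ | ∀ v ∈ T, σ v = b v} = ∏ v ∈ T, if b v then p else 1 - p := by
  set w : Bool → ℝ := fun c => if c then p else 1 - p
  have hterm : ∀ σ : V → Bool, {σ : V → Bool | ∀ v ∈ T, σ v = b v}.indicator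
      (fun τ => ∏ v, w (τ v)) σ =
      ∏ v, if v ∈ T then (if σ v = b v then w (σ v) else 0) else w (σ v) := by
    intro σ
    by_cases hσ : ∀ v ∈ T, σ v = b v
    · rw [Set.indicator_of_mem (by exact hσ)]
      exact Finset.prod_congr rfl fun v _ => by split_ifs with hv <;> simp_all
    · rw [Set.indicator_of_notMem (by exact hσ)]
      push Not at hσ
      obtain ⟨v, hvT, hv⟩ := hσ
      exact (Finset.prod_eq_zero (Finset.mem_univ v) (by simp [hvT, hv])).symm
  rw [pr, Finset.sum_congr rfl fun σ _ => hterm σ,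
    ← Fintype.prod_sum (fun v c => if v ∈ T then (if c = b v then w c else 0) else w c),
    ← Fintype.prod_ite_mem T]
  refine Finset.prod_congr rfl fun v _ => ?_
  by_cases hv : v ∈ T <;> cases b v <;> simp [hv, w]

lemma expec_mono (hp₀ : 0 ≤ p) (hp₁ : p ≤ 1) {f g : (V → Bool) → ℝ} (h : f ≤ g) :
    expec p f ≤ expec p g :=
  Finset.sum_le_sum fun σ _ => mul_le_mul_of_nonneg_right (h σ)
    (Finset.prod_nonneg fun v _ => by split <;> linarith)

lemma pr_mono (hp₀ : 0 ≤ p) (hp₁ : p ≤ 1) {S T : Set (V → Bool)} (h : S ⊆ T) :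
    pr p S ≤ pr p T := by
  rw [pr_eq_expec_indicator, pr_eq_expec_indicator]
  exact expec_mono hp₀ hp₁ (Set.indicator_le_indicator_of_subset h fun _ => zero_le_one)

lemma pr_nonneg (hp₀ : 0 ≤ p) (hp₁ : p ≤ 1) (S : Set (V → Bool)) : 0 ≤ pr p S := by
  simpa [pr_eq_expec_indicator, expec_const] using expec_mono hp₀ hp₁ (f := fun _ => 0)
    (g := S.indicator 1) (Set.indicator_nonneg fun _ _ => zero_le_one)

lemma pr_le_one (hp₀ : 0 ≤ p) (hp₁ : p ≤ 1) (S : Set (V → Bool)) : pr p S ≤ 1 := by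
  simpa [pr_eq_expec_indicator, expec_const] using
    expec_mono hp₀ hp₁ (f := S.indicator 1) (g := fun _ => 1)
      fun σ => by by_cases h : σ ∈ S <;> simp [h]

lemma pr_union_le (hp₀ : 0 ≤ p) (hp₁ : p ≤ 1) (S T : Set (V → Bool)) :
    pr p (S ∪ T) ≤ pr p S + pr p T := by
  simp only [pr_eq_expec_indicator, ← expec_add]
  refine expec_mono hp₀ hp₁ fun σ => ?_
  by_cases hS : σ ∈ S <;> by_cases hT : σ ∈ T <;> simp [hS, hT]

lemma pr_biUnion_le (hp₀ : 0 ≤ p) (hp₁ : p ≤ 1) {ι : Type*} [DecidableEq ι]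
    (A : Finset ι) (E : ι → Set (V → Bool)) :
    pr p (⋃ a ∈ A, E a) ≤ ∑ a ∈ A, pr p (E a) := by
  induction A using Finset.induction_on with
  | empty => simp [pr]
  | insert b A hb ih =>
    rw [Finset.set_biUnion_insert, Finset.sum_insert hb]
    exact (pr_union_le hp₀ hp₁ _ _).trans (add_le_add_right ih _)

lemma mul_pr_le_expec (hp₀ : 0 ≤ p) (hp₁ : p ≤ 1) {S : Set (V → Bool)}
    {f : (V → Bool) → ℝ} (hf : 0 ≤ f) {a : ℝ} (h : ∀ σ ∈ S, a ≤ f σ) :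
    a * pr p S ≤ expec p f := by
  rw [pr_eq_expec_indicator, ← expec_const_mul]
  refine expec_mono hp₀ hp₁ fun σ => ?_
  by_cases hσ : σ ∈ S
  · simpa [hσ] using h σ hσ
  · simpa [hσ] using hf σ

lemma expec_sq_sub_eq (f : (V → Bool) → ℝ) (μ : ℝ) :
    expec p (fun σ => (f σ - μ) ^ 2) = expec p (f * f) - 2 * μ * expec p f + μ ^ 2 := by
  have h : (fun σ => (f σ - μ) ^ 2) = f * f - (fun σ => 2 * μ * f σ) + fun _ => μ ^ 2 := by
    funext σ; simp only [Pi.add_apply, Pi.sub_apply, Pi.mul_apply]; ring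
  rw [h, expec_add, expec_sub, expec_const_mul, expec_const]

/-- The second-moment method: Chebyshev's inequality for the number of events `E a` that occur,
whose variance is at most its mean by pairwise independence. -/
lemma sum_pr_mul_pr_forall_notMem_le_one (hp₀ : 0 ≤ p) (hp₁ : p ≤ 1) {ι : Type*}
    [DecidableEq ι] (A : Finset ι) (E : ι → Set (V → Bool))
    (hind : ∀ a ∈ A, ∀ b ∈ A, a ≠ b → pr p (E a ∩ E b) = pr p (E a) * pr p (E b)) :
    (∑ a ∈ A, pr p (E a)) * pr p {σ | ∀ a ∈ A, σ ∉ E a} ≤ 1 := by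
  set μ := ∑ a ∈ A, pr p (E a)
  set N : (V → Bool) → ℝ := ∑ a ∈ A, (E a).indicator 1
  have hN : expec p N = μ := by
    simp only [N, expec_sum, pr_eq_expec_indicator, μ]
  have hNN : expec p (N * N) ≤ μ ^ 2 + μ := by
    have hpair : N * N = ∑ a ∈ A, ∑ b ∈ A, (E a ∩ E b).indicator 1 := by
      simp only [N, Finset.sum_mul_sum, Set.inter_indicator_one]
    have hterm : ∀ a ∈ A, ∀ b ∈ A,
        pr p (E a ∩ E b) ≤ pr p (E a) * pr p (E b) + if a = b then pr p (E a) else 0 := by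
      intro a ha b hb
      by_cases hab : a = b
      · subst hab
        simp [mul_self_nonneg]
      · simp [hab, hind a ha b hb hab]
    calc expec p (N * N) = ∑ a ∈ A, ∑ b ∈ A, pr p (E a ∩ E b) := by
          simp only [hpair, expec_sum, pr_eq_expec_indicator]
      _ ≤ ∑ a ∈ A, ∑ b ∈ A, (pr p (E a) * pr p (E b) + if a = b then pr p (E a) else 0) :=
          Finset.sum_le_sum fun a ha => Finset.sum_le_sum fun b hb => hterm a ha b hb
      _ = μ ^ 2 + μ := by
          simp only [Finset.sum_add_distrib, ← Finset.mul_sum, ← Finset.sum_mul, sq,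
            Finset.sum_ite_eq, μ]
          simp
  have hmarkov : μ ^ 2 * pr p {σ | ∀ a ∈ A, σ ∉ E a} ≤ μ := by
    calc μ ^ 2 * pr p {σ | ∀ a ∈ A, σ ∉ E a} ≤ expec p (fun σ => (N σ - μ) ^ 2) := by
          refine mul_pr_le_expec hp₀ hp₁ (fun σ => sq_nonneg _) fun σ hσ => ?_
          have hN0 : N σ = 0 := by
            simp only [N, Finset.sum_apply]
            exact Finset.sum_eq_zero fun a ha => Set.indicator_of_notMem (hσ a ha) _
          simp [hN0]
      _ ≤ μ := by rw [expec_sq_sub_eq, hN]; linarith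
  have hμ : 0 ≤ μ := Finset.sum_nonneg fun a _ => pr_nonneg hp₀ hp₁ _
  rcases hμ.eq_or_lt with h0 | hpos
  · rw [← h0, zero_mul]; exact zero_le_one
  · nlinarith [pr_nonneg hp₀ hp₁ {σ | ∀ a ∈ A, σ ∉ E a}]

lemma pr_forall_eq_false (T : Finset V) : pr p {σ | ∀ v ∈ T, σ v = false} = (1 - p) ^ #T := by
  simpa using pr_cylinder (p := p) T fun _ => false

lemma mul_pr_forall_exists_eq_true_le_one (hp₀ : 0 ≤ p) (hp₁ : p ≤ 1) {ι : Type*}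
    [DecidableEq ι] (A : Finset ι) (T : ι → Finset V) (hdisj : (A : Set ι).PairwiseDisjoint T)
    {L : ℕ} (hcard : ∀ a ∈ A, #(T a) = L) :
    (#A * (1 - p) ^ L) * pr p {σ | ∀ a ∈ A, ∃ v ∈ T a, σ v = true} ≤ 1 := by
  have hind : ∀ a ∈ A, ∀ b ∈ A, a ≠ b →
      pr p ({σ | ∀ v ∈ T a, σ v = false} ∩ {σ | ∀ v ∈ T b, σ v = false}) =
        pr p {σ | ∀ v ∈ T a, σ v = false} * pr p {σ | ∀ v ∈ T b, σ v = false} := by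
    intro a ha b hb hab
    have hunion :
        {σ : V → Bool | ∀ v ∈ T a, σ v = false} ∩ {σ | ∀ v ∈ T b, σ v = false} =
        {σ | ∀ v ∈ T a ∪ T b, σ v = false} := by
      ext σ; simp [or_imp, forall_and]
    rw [hunion, pr_forall_eq_false, pr_forall_eq_false, pr_forall_eq_false,
      Finset.card_union_of_disjoint (hdisj ha hb hab), pow_add]
  have h := sum_pr_mul_pr_forall_notMem_le_one hp₀ hp₁ A _ hind
  have hμ : ∑ a ∈ A, pr p {σ | ∀ v ∈ T a, σ v = false} = #A * (1 - p) ^ L := by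
    rw [Finset.sum_congr rfl (g := fun _ => (1 - p) ^ L) fun a ha => by
      rw [pr_forall_eq_false, hcard a ha]]
    simp
  rw [hμ] at h
  convert h using 3
  ext σ
  simp

lemma pr_forall_eq_decide_mem {D U : Finset V} (hUD : U ⊆ D) :
    pr p {σ | ∀ v ∈ D, σ v = decide (v ∈ U)} = p ^ #U * (1 - p) ^ (#D - #U) := by
  rw [pr_cylinder, Finset.prod_ite, Finset.prod_const, Finset.prod_const]
  have hin : D.filter (fun v => decide (v ∈ U) = true) = U := by
    ext v; simpa using fun hv => hUD hv
  have hout : #(D.filter (fun v => ¬decide (v ∈ U) = true)) = #D - #U := by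
    have := Finset.card_filter_add_card_filter_not (s := D) (fun v => decide (v ∈ U) = true)
    rw [hin] at this
    omega
  rw [hin, hout]

lemma pr_le_card_filter_le (hp₀ : 0 ≤ p) (hp : p ≤ 1 / 2) (D : Finset V) (k : ℕ) :
    pr p {σ | k ≤ #(D.filter (σ · = true))} ≤ 2 ^ #D * (p ^ k * (1 - p) ^ (#D - k)) := by
  set A := D.powerset.filter (k ≤ #·)
  have hcover : {σ : V → Bool | k ≤ #(D.filter (σ · = true))} ⊆
      ⋃ U ∈ A, {σ | ∀ v ∈ D, σ v = decide (v ∈ U)} := by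
    intro σ hσ
    simp only [Set.mem_iUnion, Set.mem_ofPred_eq]
    refine ⟨D.filter (σ · = true), by simpa [A] using hσ, fun v hv => ?_⟩
    cases h : σ v <;> simp [hv, h]
  have hU : ∀ U ∈ A,
      pr p {σ | ∀ v ∈ D, σ v = decide (v ∈ U)} ≤ p ^ k * (1 - p) ^ (#D - k) := by
    intro U hU
    obtain ⟨hUD, hkU⟩ : U ⊆ D ∧ k ≤ #U := by simpa [A] using hU
    obtain ⟨j, hj⟩ := Nat.exists_eq_add_of_le hkU
    have hdk : #D - k = j + (#D - #U) := by have := Finset.card_le_card hUD; omega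
    rw [pr_forall_eq_decide_mem hUD, hdk, hj, pow_add, pow_add, mul_assoc]
    have : 0 ≤ 1 - p := by linarith
    gcongr
    linarith
  have hA : (#A : ℝ) ≤ 2 ^ #D := by
    exact_mod_cast (Finset.card_filter_le _ _).trans (Finset.card_powerset D).le
  calc pr p {σ | k ≤ #(D.filter (σ · = true))}
      ≤ ∑ U ∈ A, pr p {σ | ∀ v ∈ D, σ v = decide (v ∈ U)} :=
        (pr_mono hp₀ (by linarith) hcover).trans (pr_biUnion_le hp₀ (by linarith) _ _)
    _ ≤ #A * (p ^ k * (1 - p) ^ (#D - k)) := by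
        simpa using Finset.sum_le_sum hU
    _ ≤ 2 ^ #D * (p ^ k * (1 - p) ^ (#D - k)) := by
        gcongr
        have : 0 ≤ 1 - p := by linarith
        positivity

end Bernoulli

section RingDynamics

variable {n r : ℕ}

lemma activeNbrs_mono {σ τ : ZMod n → Bool} (h : σ ≤ τ) (x : ZMod n) :
    activeNbrs n r σ x ≤ activeNbrs n r τ x := by
  have hind : ∀ y, (if σ y then 1 else 0 : ℕ) ≤ if τ y then 1 else 0 := fun y => by
    have := Bool.le_iff_imp.mp (h y)
    cases hσ : σ y <;> cases hτ : τ y <;> simp_all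
  exact Finset.sum_le_sum fun k _ => add_le_add (hind _) (hind _)

lemma ringStep_mono : Monotone (ringStep n r) := fun σ τ h x => by
  have hx := Bool.le_iff_imp.mp (h x)
  have hcount := activeNbrs_mono (r := r) h x
  simp only [ringStep, Bool.le_iff_imp, Bool.or_eq_true, decide_eq_true_eq]
  rintro (h' | h')
  · exact Or.inl (hx h')
  · exact Or.inr (h'.trans hcount)

lemma le_ringStep (σ : ZMod n → Bool) : σ ≤ ringStep n r σ := fun x => by
  simp +contextual [ringStep, Bool.le_iff_imp]

lemma ringStep_eq_self {π : ZMod n → Bool}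
    (h : ∀ y, π y = false → activeNbrs n r π y ≤ r) :
    ringStep n r π = π := by
  funext y
  cases hy : π y
  · simpa [ringStep, hy] using h y hy
  · simp [ringStep, hy]

lemma iterate_ringStep_le {σ π : ZMod n → Bool} (hσ : σ ≤ π) (hπ : ringStep n r π = π)
    (t : ℕ) :
    (ringStep n r)^[t] σ ≤ π :=
  Function.iterate_fixed hπ t ▸ ringStep_mono.iterate t hσ

lemma sum_Icc_ite_lt_add_ite_lt {j : ℕ} (hj : j ≤ r) :
    ∑ k ∈ Finset.Icc 1 r, ((if r < j + k then 1 else 0) + (if j < k then 1 else 0)) = r := by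
  have hcount : ∀ m ≤ r, #((Finset.Icc 1 r).filter (m < ·)) = r - m := fun m hm => by
    rw [show (Finset.Icc 1 r).filter (m < ·) = Finset.Ioc m r by ext; simp; omega,
      Nat.card_Ioc]
  rw [Finset.sum_add_distrib, Finset.sum_boole, Finset.sum_boole, Nat.cast_id, Nat.cast_id,
    Finset.filter_congr (q := (r - j < ·)) (fun k _ => by omega), hcount _ (Nat.sub_le r j),
    hcount j hj]
  omega

lemma activeNbrs_le_of_passive_run {τ : ZMod n → Bool} {x : ZMod n} {s : ℤ}
    (hrun : ∀ e ∈ Finset.Icc s (s + r), τ (x + e) = false) {c : ℤ}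
    (hc : c ∈ Finset.Icc s (s + r)) : activeNbrs n r τ (x + c) ≤ r := by
  obtain ⟨j, rfl⟩ : ∃ j : ℕ, c = s + j := ⟨(c - s).toNat, by simp at hc; omega⟩
  have hj : j ≤ r := by simp at hc; omega
  refine (Finset.sum_le_sum fun k hk => ?_).trans (sum_Icc_ite_lt_add_ite_lt hj).le
  have hk := Finset.mem_Icc.mp hk
  have hplus : ¬ r < j + k → τ (x + (s + j) + k) = false := fun h => by
    simpa [add_assoc] using hrun (s + j + k) (by simp; omega)
  have hminus : ¬ j < k → τ (x + (s + j) - k) = false := fun h => by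
    simpa [add_sub_assoc, add_assoc] using hrun (s + j - k) (by simp; omega)
  push_cast
  refine add_le_add ?_ ?_
  · by_cases h : r < j + k
    · simp only [h, if_true]; split <;> omega
    · simp [hplus h]
  · by_cases h : j < k
    · simp only [h, if_true]; split <;> omega
    · simp [hminus h]

lemma iterate_ringStep_eq_false_of_enclosed {σ : ZMod n → Bool} {i : ZMod n} {a b : ℤ}
    (ha : a < 0) (hb : 0 < b)
    (hleft : ∀ e ∈ Finset.Icc (a - r) a, σ (i + e) = false)
    (hright : ∀ e ∈ Finset.Icc b (b + r), σ (i + e) = false)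
    (hmid : ∀ c ∈ Finset.Ioo a b, activeNbrs n r σ (i + c) ≤ r)
    (hi : σ i = false) (t : ℕ) : (ringStep n r)^[t] σ i = false := by
  set W := (Finset.Icc (a - r) (b + r)).image fun e : ℤ => i + (e : ZMod n)
  -- `π` agrees with `σ` on the window `W` and is active outside it: a fixed point above `σ`.
  set π : ZMod n → Bool := fun y => σ y || decide (y ∉ W)
  have hσπ : σ ≤ π := fun y => by simp +contextual [π, Bool.le_iff_imp]
  have hπW : ∀ e ∈ Finset.Icc (a - r) (b + r), π (i + e) = σ (i + e) := fun e he => by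
    simp [π, W, Finset.mem_image_of_mem _ he]
  have hπ : ringStep n r π = π := by
    refine ringStep_eq_self fun y hy => ?_
    have hyW : y ∈ W := by by_contra h; simp [π, h] at hy
    obtain ⟨e, he, rfl⟩ := Finset.mem_image.mp hyW
    have he' := Finset.mem_Icc.mp he
    by_cases hea : e ≤ a
    · refine activeNbrs_le_of_passive_run (s := a - r) (fun e' he' => ?_) (by simp; omega)
      have he'' := Finset.mem_Icc.mp he'
      rw [hπW e' (by simp; omega)]
      exact hleft e' (by simp; omega)
    by_cases heb : b ≤ e
    · refine activeNbrs_le_of_passive_run (s := b) (fun e' he' => ?_) (by simp; omega)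
      have he'' := Finset.mem_Icc.mp he'
      rw [hπW e' (by simp; omega)]
      exact hright e' (by simpa using he')
    have hsame : activeNbrs n r π (i + e) = activeNbrs n r σ (i + e) := by
      refine Finset.sum_congr rfl fun k hk => ?_
      have hk := Finset.mem_Icc.mp hk
      have hplus := hπW (e + k) (by simp; omega)
      have hminus := hπW (e - k) (by simp; omega)
      push_cast at hplus hminus
      rw [add_assoc, hplus, add_sub_assoc, hminus]
    rw [hsame]
    exact hmid e (by simp; omega)
  have hπi : π i = false := by simpa [hi] using hπW 0 (by simp; omega)
  simpa [hπi, Bool.le_iff_imp] using iterate_ringStep_le hσπ hπ t i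

end RingDynamics

section Geometry

variable {n : ℕ}

lemma ZMod.intCast_eq_intCast_iff_of_abs_sub_lt {a b : ℤ} (hab : |a - b| < n) :
    (a : ZMod n) = b ↔ a = b := by
  refine ⟨fun h => ?_, congrArg _⟩
  have hdvd := ((ZMod.intCast_eq_intCast_iff a b n).mp h).symm.dvd
  have := Int.eq_zero_of_abs_lt_dvd hdvd hab
  omega

lemma add_intCast_injOn {W : ℤ} (hW : 2 * W < n) (x : ZMod n) :
    Set.InjOn (fun e : ℤ => x + (e : ZMod n)) (Finset.Icc (-W) W) := fun e he e' he' h => by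
  simp only [Finset.coe_Icc, Set.mem_Icc] at he he'
  exact (ZMod.intCast_eq_intCast_iff_of_abs_sub_lt (by rw [abs_lt]; omega)).mp
    (add_left_cancel h)

lemma mul_succ_mem_Icc {a m r : ℕ} (ha : a ∈ Finset.Icc 1 m) :
    (a : ℤ) * (r + 1) ∈ Finset.Icc ((r : ℤ) + 1) (m * (r + 1)) := by
  have ha : (1 : ℤ) ≤ a ∧ (a : ℤ) ≤ m := by exact_mod_cast Finset.mem_Icc.mp ha
  simp only [Finset.mem_Icc]
  constructor <;> nlinarith

lemma mul_succ_add_lt_mul_succ {a a' r : ℕ} (h : a < a') :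
    (a : ℤ) * (r + 1) + r < a' * (r + 1) := by
  have : (a : ℤ) + 1 ≤ a' := by exact_mod_cast h
  nlinarith

end Geometry

def everyBlockOccupied (n r : ℕ) (i : ZMod n) (m : ℕ) (s : ℕ → ℤ) :
    Set (ZMod n → Bool) :=
  {σ | ∀ a ∈ Finset.Icc 1 m, ∃ e ∈ Finset.Icc (s a) (s a + r), σ (i + e) = true}

def someCrowded (n r : ℕ) (i : ZMod n) (M : ℤ) : Set (ZMod n → Bool) :=
  ⋃ c ∈ Finset.Icc (-M) M, {σ | r + 1 ≤ activeNbrs n r σ (i + c)}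

lemma iterate_ringStep_subset {n r : ℕ} (i : ZMod n) (m t : ℕ) :
    {σ | (ringStep n r)^[t] σ i = true} ⊆ {σ | σ i = true} ∪
      everyBlockOccupied n r i m (fun a => a * (r + 1)) ∪
      everyBlockOccupied n r i m (fun a => -(a * (r + 1)) - r) ∪
      someCrowded n r i (m * (r + 1)) := by
  intro σ hσ
  by_contra hout
  simp only [Set.mem_union, not_or] at hout
  obtain ⟨⟨⟨hi, hR⟩, hL⟩, hC⟩ := hout
  obtain ⟨a, ha, hrunR⟩ : ∃ a ∈ Finset.Icc 1 m, ∀ e ∈ Finset.Icc ((a : ℤ) * (r + 1))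
      ((a : ℤ) * (r + 1) + r), σ (i + e) = false := by
    simpa [everyBlockOccupied, and_assoc] using hR
  obtain ⟨a', ha', hrunL⟩ : ∃ a ∈ Finset.Icc 1 m,
      ∀ e ∈ Finset.Icc (-((a : ℤ) * (r + 1)) - r) (-((a : ℤ) * (r + 1)) - r + r),
        σ (i + e) = false := by
    simpa [everyBlockOccupied, and_assoc] using hL
  have hquiet : ∀ c ∈ Finset.Icc (-(m * (r + 1) : ℤ)) (m * (r + 1)),
      activeNbrs n r σ (i + c) ≤ r := by
    simpa [someCrowded] using hC
  have hstartR := Finset.mem_Icc.mp (mul_succ_mem_Icc (r := r) ha)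
  have hstartL := Finset.mem_Icc.mp (mul_succ_mem_Icc (r := r) ha')
  have hfalse := iterate_ringStep_eq_false_of_enclosed
    (a := -((a' : ℤ) * (r + 1))) (b := (a : ℤ) * (r + 1)) (by omega) (by omega)
    (fun e he => hrunL e (by simp at he ⊢; omega)) hrunR
    (fun c hc => hquiet c (by simp at hc ⊢; omega)) (by simpa using hi) t
  simp [hfalse] at hσ

section Events

variable {n r : ℕ} [NeZero n] {q : ℝ}

lemma pr_succ_le_activeNbrs_le (hn : 2 * r < n) (hq₀ : 0 ≤ q) (hq : q ≤ 1 / 2)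
    (x : ZMod n) :
    pr q {σ | r + 1 ≤ activeNbrs n r σ x} ≤ 4 ^ r * (q ^ (r + 1) * (1 - q) ^ (r - 1)) := by
  have hinj : ∀ e ∈ Finset.Icc (-r : ℤ) r, ∀ e' ∈ Finset.Icc (-r : ℤ) r,
      x + (e : ZMod n) = x + e' → e = e' := fun e he e' he' =>
    add_intCast_injOn (W := r) (by omega) x (by simpa using he) (by simpa using he')
  set Dr := (Finset.Icc 1 r).image fun k : ℕ => x + (k : ZMod n)
  set Dl := (Finset.Icc 1 r).image fun k : ℕ => x - (k : ZMod n)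
  have hinjr : Set.InjOn (fun k : ℕ => x + (k : ZMod n)) (Finset.Icc 1 r) :=
      fun k hk k' hk' h => by
    simp only [Finset.coe_Icc, Set.mem_Icc] at hk hk'
    have := hinj k (by simp; omega) k' (by simp; omega) (by simpa using h)
    omega
  have hinjl : Set.InjOn (fun k : ℕ => x - (k : ZMod n)) (Finset.Icc 1 r) :=
      fun k hk k' hk' h => by
    simp only [Finset.coe_Icc, Set.mem_Icc] at hk hk'
    have := hinj (-k) (by simp; omega) (-k') (by simp; omega) (by simpa [sub_eq_add_neg] using h)
    omega
  have hdisj : Disjoint Dr Dl := by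
    simp only [Dr, Dl, Finset.disjoint_left, Finset.mem_image, Finset.mem_Icc]
    rintro _ ⟨k, hk, rfl⟩ ⟨k', hk', h⟩
    have := hinj (-k') (by simp; omega) k (by simp; omega) (by simpa [sub_eq_add_neg] using h)
    omega
  have hcount : ∀ σ : ZMod n → Bool,
      activeNbrs n r σ x = #((Dr ∪ Dl).filter (σ · = true)) := by
    intro σ
    rw [Finset.card_filter, Finset.sum_union hdisj, Finset.sum_image hinjr,
      Finset.sum_image hinjl, ← Finset.sum_add_distrib]
    rfl
  have hcard : #(Dr ∪ Dl) = 2 * r := by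
    rw [Finset.card_union_of_disjoint hdisj, Finset.card_image_of_injOn hinjr,
      Finset.card_image_of_injOn hinjl, Nat.card_Icc]
    omega
  simp only [hcount]
  convert pr_le_card_filter_le hq₀ hq (Dr ∪ Dl) (r + 1) using 2
  · rw [hcard, pow_mul]; norm_num
  · rw [hcard]; congr 2; omega

lemma pr_everyBlockOccupied_le (hq₀ : 0 ≤ q) (hq₁ : q < 1) {W : ℤ} (hW : 2 * W < n)
    (i : ZMod n) {m : ℕ} (hm : 1 ≤ m) (s : ℕ → ℤ)
    (hs : ∀ a ∈ Finset.Icc 1 m, -W ≤ s a ∧ s a + r ≤ W)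
    (hsep : ∀ a a', a < a' → s a + r < s a' ∨ s a' + r < s a) :
    pr q (everyBlockOccupied n r i m s) ≤ 1 / (m * (1 - q) ^ (r + 1)) := by
  set block : ℕ → Finset (ZMod n) := fun a =>
    (Finset.Icc (s a) (s a + r)).image fun e : ℤ => i + (e : ZMod n)
  have hinj : ∀ a ∈ Finset.Icc 1 m, Set.InjOn (fun e : ℤ => i + (e : ZMod n))
      (Finset.Icc (s a) (s a + r)) := fun a ha =>
    (add_intCast_injOn hW i).mono fun e he => by
      have := hs a ha; simp only [Finset.coe_Icc, Set.mem_Icc] at he ⊢; omega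
  have hcard : ∀ a ∈ Finset.Icc 1 m, #(block a) = r + 1 := fun a ha => by
    rw [Finset.card_image_of_injOn (hinj a ha), Int.card_Icc]; omega
  have hdisj : ((Finset.Icc 1 m : Finset ℕ) : Set ℕ).PairwiseDisjoint block := by
    intro a ha a' ha' hne
    simp only [Function.onFun, block, Finset.disjoint_left, Finset.mem_image]
    rintro _ ⟨e, he, rfl⟩ ⟨e', he', h⟩
    have hea := hs a ha; have hea' := hs a' ha'
    have heq : e' = e := add_intCast_injOn hW i (x₁ := e') (x₂ := e)
      (by simp at he' ⊢; omega) (by simp at he ⊢; omega) h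
    have := hne.lt_or_gt.imp (hsep a a') (hsep a' a)
    simp at he he'
    omega
  have h := mul_pr_forall_exists_eq_true_le_one hq₀ hq₁.le _ block hdisj hcard
  simp only [Nat.card_Icc, add_tsub_cancel_right, block, Finset.mem_image,
    exists_exists_and_eq_and] at h
  have hβ : (0 : ℝ) < m * (1 - q) ^ (r + 1) := by
    have : (0 : ℝ) < 1 - q := by linarith
    have : (0 : ℝ) < m := by exact_mod_cast hm
    positivity
  rwa [le_div_iff₀' hβ]

lemma pr_someCrowded_le (hn : 2 * r < n) (hq₀ : 0 ≤ q) (hq : q ≤ 1 / 2) (i : ZMod n) {M : ℤ}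
    (hM : 0 ≤ M) :
    pr q (someCrowded n r i M) ≤ (2 * M + 1) * (4 ^ r * (q ^ (r + 1) * (1 - q) ^ (r - 1))) := by
  refine (pr_biUnion_le hq₀ (by linarith) _ _).trans ?_
  refine (Finset.sum_le_sum fun c _ => pr_succ_le_activeNbrs_le hn hq₀ hq _).trans_eq ?_
  have hcard : ((M + 1 - -M).toNat : ℤ) = 2 * M + 1 := by omega
  rw [Finset.sum_const, Int.card_Icc, nsmul_eq_mul, ← Int.cast_natCast, hcard]
  push_cast
  ring

lemma pr_iterate_ringStep_le {m : ℕ} (hm : 1 ≤ m) (hn : 2 * (m * (r + 1) + r) < n)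
    (hq₀ : 0 ≤ q) (hq : q ≤ 1 / 2) (i : ZMod n) (t : ℕ) :
    pr q {σ | (ringStep n r)^[t] σ i = true} ≤ q + 2 / (m * (1 - q) ^ (r + 1)) +
      (2 * m * (r + 1) + 1) * (4 ^ r * (q ^ (r + 1) * (1 - q) ^ (r - 1))) := by
  have hq₁ : q < 1 := by linarith
  have hW : 2 * ((m * (r + 1) : ℤ) + r) < n := by
    have : ((2 * (m * (r + 1) + r) : ℕ) : ℤ) < n := by exact_mod_cast hn
    push_cast at this
    linarith
  have hright := pr_everyBlockOccupied_le (r := r) hq₀ hq₁ hW i hm (fun a => a * (r + 1))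
    (fun a ha => by have := Finset.mem_Icc.mp (mul_succ_mem_Icc (r := r) ha); omega)
    fun a a' h => Or.inl (mul_succ_add_lt_mul_succ h)
  have hleft := pr_everyBlockOccupied_le (r := r) hq₀ hq₁ hW i hm (fun a => -(a * (r + 1)) - r)
    (fun a ha => by have := Finset.mem_Icc.mp (mul_succ_mem_Icc (r := r) ha); omega)
    fun a a' h => Or.inr (by have := mul_succ_add_lt_mul_succ (r := r) h; omega)
  have hcrowded :=
    pr_someCrowded_le (r := r) (by omega) hq₀ hq i (M := m * (r + 1)) (by positivity)
  have hactive : pr q {σ : ZMod n → Bool | σ i = true} = q := by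
    simpa using pr_cylinder (p := q) {i} fun _ => true
  calc pr q {σ | (ringStep n r)^[t] σ i = true}
      ≤ pr q {σ | σ i = true} + pr q (everyBlockOccupied n r i m fun a => a * (r + 1)) +
          pr q (everyBlockOccupied n r i m fun a => -(a * (r + 1)) - r) +
          pr q (someCrowded n r i (m * (r + 1))) := by
        refine (pr_mono hq₀ hq₁.le (iterate_ringStep_subset i m t)).trans ?_
        refine (pr_union_le hq₀ hq₁.le _ _).trans (add_le_add_left ?_ _)
        refine (pr_union_le hq₀ hq₁.le _ _).trans (add_le_add_left ?_ _)
        exact pr_union_le hq₀ hq₁.le _ _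
    _ ≤ _ := by
        push_cast at hcrowded
        have : 2 / (m * (1 - q) ^ (r + 1)) =
            1 / (m * (1 - q) ^ (r + 1)) + 1 / (m * (1 - q) ^ (r + 1)) := by ring
        linarith

end Events

section Wheel

variable {n r : ℕ} {q : ℝ}

lemma pr_comp_some {W : Type} [Fintype W] [DecidableEq W] (S : Set (W → Bool)) :
    pr q {σ : Option W → Bool | (fun w => σ (some w)) ∈ S} = pr q S := by
  simp only [pr_eq_expec_indicator, expec]
  rw [Fintype.sum_equiv (Equiv.piOptionEquivProd (β := fun _ => Bool)) _
    (fun bσ => S.indicator 1 bσ.2 * ((if bσ.1 then q else 1 - q) *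
      ∏ w, if bσ.2 w then q else 1 - q)) fun τ => by
        by_cases h : (fun w => τ (some w)) ∈ S <;> cases hτ : τ none <;>
          simp [h, hτ, Fintype.prod_option, Equiv.piOptionEquivProd]]
  rw [Fintype.sum_prod_type, Fintype.sum_bool, ← Finset.sum_add_distrib]
  refine Finset.sum_congr rfl fun σ _ => ?_
  simp only [if_true, Bool.false_eq_true, if_false]
  ring

variable [NeZero n]

lemma wheelStep_elim_false {τ : ZMod n → Bool} (hτ : 2 * #{i | τ i = true} ≤ n) :
    wheelStep n r (fun v => v.elim false τ) = fun v => v.elim false (ringStep n r τ) := by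
  funext v
  cases v with
  | none =>
    show (false || decide (n + 1 ≤ 2 * #{i | τ i = true})) = false
    simpa using hτ
  | some i =>
    show (τ i || decide (r + 1 ≤ (if false then 1 else 0) + activeNbrs n r τ i)) = _
    rw [if_neg Bool.false_ne_true, zero_add]
    rfl

lemma iterate_wheelStep_elim_false {τ : ZMod n → Bool} {t : ℕ}
    (hτ : ∀ s < t, 2 * #{i | (ringStep n r)^[s] τ i = true} ≤ n) :
    (wheelStep n r)^[t] (fun v => v.elim false τ) =
      fun v => v.elim false ((ringStep n r)^[t] τ) := by
  induction t with
  | zero => rfl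
  | succ t ih =>
    rw [Function.iterate_succ_apply', Function.iterate_succ_apply',
      ih fun s hs => hτ s (by omega), wheelStep_elim_false (hτ t (by omega))]

lemma card_active_iterate_ringStep_mono (τ : ZMod n → Bool) :
    Monotone fun t => #{i | (ringStep n r)^[t] τ i = true} := by
  refine monotone_nat_of_le_succ fun t => Finset.card_le_card fun i => ?_
  simp only [Finset.mem_filter, Finset.mem_univ, true_and, Function.iterate_succ_apply']
  exact Bool.le_iff_imp.mp (le_ringStep _ i)

/-- A percolating initial state has an active hub, or its ring part alone reaches a strict
majority. -/
lemma pW_le_add_pR (hq₀ : 0 ≤ q) (hq₁ : q ≤ 1) : pW r q n ≤ q + pR r q n := by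
  rw [pW, pR, dif_neg (NeZero.ne n), dif_neg (NeZero.ne n)]
  set majority := {σ : ZMod n → Bool | n < 2 * #{i | ringFix n r σ i = true}}
  have hcover : {σ : Option (ZMod n) → Bool | ∀ v, wheelFix n r σ v = true} ⊆
      {σ | ∀ v ∈ ({none} : Finset _), σ v = (fun _ => true) v} ∪
        {σ | (fun i => σ (some i)) ∈ majority} := by
    intro σ hσ
    by_contra hout
    simp only [Set.mem_union, not_or, Set.mem_ofPred_eq, Finset.mem_singleton, forall_eq,
      Bool.not_eq_true, majority, not_lt] at hout
    obtain ⟨hhub, hminority⟩ := hout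
    have hσ_eq : σ = fun v => v.elim false fun i => σ (some i) := by
      funext v; cases v <;> simp [hhub]
    have hstuck := iterate_wheelStep_elim_false (r := r) (t := n + 1)
      (τ := fun i => σ (some i)) fun s hs =>
        (Nat.mul_le_mul_left 2 (card_active_iterate_ringStep_mono _ (by omega : s ≤ n))).trans
          hminority
    have := hσ none
    rw [wheelFix, hσ_eq, hstuck] at this
    simp at this
  refine (pr_mono hq₀ hq₁ hcover).trans ((pr_union_le hq₀ hq₁ _ _).trans ?_)
  rw [pr_cylinder, pr_comp_some]
  simp

/-- Markov's inequality for the number of active vertices. -/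
lemma pR_le (hq₀ : 0 ≤ q) (hq₁ : q ≤ 1) {B : ℝ}
    (hB : ∀ i, pr q {σ | ringFix n r σ i = true} ≤ B) : pR r q n ≤ 2 * B := by
  rw [pR, dif_neg (NeZero.ne n)]
  set count : (ZMod n → Bool) → ℝ := fun σ => #{i | ringFix n r σ i = true}
  have hcount : expec q count = ∑ i, pr q {σ | ringFix n r σ i = true} := by
    have : count = ∑ i, {σ | ringFix n r σ i = true}.indicator 1 := by
      funext σ
      rw [Finset.sum_apply]
      simp only [count, Finset.natCast_card_filter]
      simp [Set.indicator_apply]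
    rw [this, expec_sum]
    simp only [pr_eq_expec_indicator]
  have hmarkov : ((n + 1) / 2 : ℝ) * pr q {σ | n < 2 * #{i | ringFix n r σ i = true}} ≤
      n * B := by
    refine (mul_pr_le_expec hq₀ hq₁ (f := count) (fun σ => by positivity)
      fun σ hσ => ?_).trans ?_
    · have : ((n + 1 : ℕ) : ℝ) ≤ ((2 * #{i | ringFix n r σ i = true} : ℕ) : ℝ) := by
        exact_mod_cast hσ
      push_cast at this
      simp only [count]
      linarith
    · rw [hcount]
      simpa using Finset.sum_le_sum fun i (_ : i ∈ Finset.univ) => hB i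
  have hB0 : 0 ≤ B := (pr_nonneg hq₀ hq₁ _).trans (hB 0)
  have hn : (0 : ℝ) < n := by exact_mod_cast Nat.pos_of_ne_zero (NeZero.ne n)
  nlinarith [pr_nonneg hq₀ hq₁ {σ : ZMod n → Bool | n < 2 * #{i | ringFix n r σ i = true}}]

end Wheel

section Threshold

open Filter

variable {r : ℕ}

theorem pW_le {n m : ℕ} {q : ℝ} (hm : 1 ≤ m) (hn : 2 * (m * (r + 1) + r) < n)
    (hq₀ : 0 ≤ q) (hq : q ≤ 1 / 2) :
    pW r q n ≤ 3 * q + 4 / (m * (1 - q) ^ (r + 1)) +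
      2 * (2 * m * (r + 1) + 1) * (4 ^ r * (q ^ (r + 1) * (1 - q) ^ (r - 1))) := by
  have : NeZero n := ⟨by omega⟩
  have hq₁ : q ≤ 1 := by linarith
  calc pW r q n ≤ q + pR r q n := pW_le_add_pR hq₀ hq₁
    _ ≤ q + 2 * (q + 2 / (m * (1 - q) ^ (r + 1)) +
          (2 * m * (r + 1) + 1) * (4 ^ r * (q ^ (r + 1) * (1 - q) ^ (r - 1)))) :=
        by gcongr; exact pR_le hq₀ hq₁ fun i => pr_iterate_ringStep_le hm hn hq₀ hq i n
    _ = _ := by ring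

lemma four_pow_mul_pow_le {y : ℝ} (hy₀ : 0 ≤ y) (hy : y ≤ 1 / 4) (hr : 1 ≤ r) :
    4 ^ r * (y ^ (r + 1) * (1 - y) ^ (r - 1)) ≤ 4 / 9 * ((4 * y) ^ r * (1 - y) ^ (r + 1)) := by
  have h1y : 0 ≤ 1 - y := by linarith
  have hyy : 9 * y ≤ 4 * (1 - y) ^ 2 := by nlinarith
  calc 4 ^ r * (y ^ (r + 1) * (1 - y) ^ (r - 1))
      = (4 * y) ^ r * (1 - y) ^ (r - 1) * (9 * y) / 9 := by ring
    _ ≤ (4 * y) ^ r * (1 - y) ^ (r - 1) * (4 * (1 - y) ^ 2) / 9 := by gcongr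
    _ = 4 / 9 * ((4 * y) ^ r * (1 - y) ^ (r - 1 + 2)) := by ring
    _ = 4 / 9 * ((4 * y) ^ r * (1 - y) ^ (r + 1)) := by rw [show r - 1 + 2 = r + 1 by omega]

/-- With `m ≈ 64 / (1 - y) ^ (r + 1)` blocks, all three error terms of `pW_le` are small. -/
lemma eventually_pW_le {p y : ℝ} (hp : p ≤ 1 / 4) (hr : 1 ≤ r)
    (hsmall : (r + 1) * (4 * p) ^ r ≤ 1 / 2000) (hy₀ : 0 ≤ y) (hy : y ≤ p) :
    ∀ᶠ n in atTop, pW r y n ≤ 7 / 8 := by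
  set β := (1 - y) ^ (r + 1)
  have h1y : 0 ≤ 1 - y := by linarith
  have hβ₀ : 0 < β := pow_pos (by linarith) _
  have hβ₁ : β ≤ 1 := pow_le_one₀ (by linarith) (by linarith)
  set m := ⌈64 / β⌉₊
  have hmβ : 64 ≤ m * β := by
    rw [← div_le_iff₀ hβ₀]; exact Nat.le_ceil _
  have hmβ' : m * β ≤ 65 := by
    have := Nat.ceil_lt_add_one (show 0 ≤ 64 / β by positivity)
    calc m * β ≤ (64 / β + 1) * β := by gcongr
      _ = 64 + β := by field_simp
      _ ≤ 65 := by linarith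
  have hm : 1 ≤ m := by
    have : (1 : ℝ) ≤ m := by nlinarith
    exact_mod_cast this
  have hwindow : 4 ^ r * (y ^ (r + 1) * (1 - y) ^ (r - 1)) ≤ 4 / 9 * ((4 * p) ^ r * β) :=
    (four_pow_mul_pow_le hy₀ (by linarith) hr).trans (by gcongr)
  filter_upwards [eventually_gt_atTop (2 * (m * (r + 1) + r))] with n hn
  refine (pW_le hm hn hy₀ (by linarith)).trans ?_
  have hblocks : 4 / (m * β) ≤ 1 / 16 := by
    rw [div_le_iff₀ (by linarith)]; linarith
  have hcount : (2 * m * (r + 1) + 1 : ℝ) ≤ (2 * m + 1) * (r + 1) := by nlinarith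
  have hcrowd :
      2 * (2 * m * (r + 1) + 1) * (4 ^ r * (y ^ (r + 1) * (1 - y) ^ (r - 1))) ≤ 1 / 16 :=
    calc 2 * (2 * m * (r + 1) + 1) * (4 ^ r * (y ^ (r + 1) * (1 - y) ^ (r - 1)))
        ≤ 2 * ((2 * m + 1) * (r + 1)) * (4 / 9 * ((4 * p) ^ r * β)) := by gcongr
      _ = 8 / 9 * (2 * (m * β) + β) * ((r + 1) * (4 * p) ^ r) := by ring
      _ ≤ 8 / 9 * 131 * (1 / 2000) := by
          have : 0 ≤ p := hy₀.trans hy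
          gcongr
          linarith
      _ ≤ 1 / 16 := by norm_num
  linarith

lemma wheelStep_true {n : ℕ} [NeZero n] : wheelStep n r (fun _ => true) = fun _ => true := by
  funext v; cases v <;> rfl

lemma pW_nonneg {n : ℕ} {q : ℝ} (hq₀ : 0 ≤ q) (hq₁ : q ≤ 1) : 0 ≤ pW r q n := by
  rw [pW]
  split_ifs with hn
  · exact le_rfl
  · have : NeZero n := ⟨hn⟩
    exact pr_nonneg hq₀ hq₁ _

lemma pW_one {n : ℕ} (hn : n ≠ 0) : pW r 1 n = 1 := by
  have : NeZero n := ⟨hn⟩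
  rw [pW, dif_neg hn]
  refine le_antisymm (pr_le_one zero_le_one le_rfl _) ?_
  calc (1 : ℝ)
      = pr 1 {σ : Option (ZMod n) → Bool | ∀ v ∈ Finset.univ, σ v = (fun _ => true) v} := by
        rw [pr_cylinder]; simp
    _ ≤ _ := by
        refine pr_mono zero_le_one le_rfl fun σ hσ v => ?_
        obtain rfl : σ = fun _ => true := funext fun v => hσ v (Finset.mem_univ v)
        rw [wheelFix, Function.iterate_fixed wheelStep_true]

lemma one_mem_pcPlus_set :
    (1 : ℝ) ∈ {p : ℝ | p ∈ Set.Icc (0:ℝ) 1 ∧ liminf (fun n => pW r p n) atTop = 1} := by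
  refine ⟨⟨zero_le_one, le_rfl⟩, ?_⟩
  rw [liminf_congr ((eventually_ne_atTop 0).mono fun n hn => pW_one hn), liminf_const]

lemma pcPlus_le_one : pcPlus r ≤ 1 :=
  csInf_le ⟨0, fun _ hp => hp.1.1⟩ one_mem_pcPlus_set

lemma le_pcPlus {p : ℝ} (hp : p ≤ 1 / 4) (hr : 1 ≤ r)
    (hsmall : (r + 1) * (4 * p) ^ r ≤ 1 / 2000) :
    p ≤ pcPlus r := by
  refine le_csInf ⟨1, one_mem_pcPlus_set⟩ fun y ⟨⟨hy₀, hy₁⟩, hlim⟩ =>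
    le_of_not_gt fun hyp => ?_
  have : liminf (fun n => pW r y n) atTop ≤ 7 / 8 :=
    liminf_le_of_frequently_le (eventually_pW_le hp hr hsmall hy₀ hyp.le).frequently
      (isBoundedUnder_of ⟨0, fun n => pW_nonneg hy₀ hy₁⟩)
  linarith

lemma eventually_le_pcPlus {p : ℝ} (hp₀ : 0 ≤ p) (hp : p < 1 / 4) :
    ∀ᶠ r in atTop, p ≤ pcPlus r := by
  have hp' : |4 * p| < 1 := abs_lt.mpr ⟨by linarith, by linarith⟩
  have hdecay : Tendsto (fun r : ℕ => (r + 1) * (4 * p) ^ r) atTop (nhds 0) := by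
    simpa [add_mul] using (tendsto_self_mul_const_pow_of_abs_lt_one hp').add
      (tendsto_pow_atTop_nhds_zero_of_abs_lt_one hp')
  filter_upwards [hdecay.eventually (ge_mem_nhds (by norm_num : (0 : ℝ) < 1 / 2000)),
    eventually_ge_atTop 1] with r hsmall hr
  exact le_pcPlus hp.le hr hsmall

end Threshold

/-- `liminf_{r→∞} p_c^+(WH(r)) ≥ 1/4`. -/
theorem pcPlus_liminf_ge :
    (1 / 4 : ℝ) ≤ Filter.liminf (fun r : ℕ => pcPlus r) Filter.atTop := by
  refine le_of_forall_lt_imp_le_of_dense fun p hp => (le_max_left p 0).trans ?_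
  refine Filter.le_liminf_of_le
    (Filter.isBoundedUnder_of ⟨1, fun _ => pcPlus_le_one⟩).isCoboundedUnder_ge ?_
  exact eventually_le_pcPlus (le_max_right p 0) (max_lt hp (by norm_num))
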